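/- arXiv:2401.16833 — 2 statements merged into one kernel-verified Lean document; each statement's English description precedes it below -/
import Mathlib

section
/- If A' ⊑ A and B' ⊑ B, then A' ⊞ B' ⊑ A ⊞ B and A' ⊛ B' ⊑ A ⊛ B. -/
open scoped BigOperators

noncomputable section

/-- A joint "distribution" bundle: a finite output alphabet together with a
function on `Bool × Y`. -/
structure JD where
  Y : Type
  fin : Fintype Y
  p : Bool → Y → ℝ

attribute [instance] JD.fin

/-- `A` is an actual joint probability distribution. -/
def JD.IsDist (A : JD) : Prop :=
  (∀ x y, 0 ≤ A.p x y) ∧ ∑ x : Bool, ∑ y, A.p x y = 1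

/-- `A` is stochastically degraded from `B`, via a channel `Q`. -/
def Degraded (A B : JD) : Prop :=
  ∃ Q : B.Y → A.Y → ℝ,
    (∀ w z, 0 ≤ Q w z) ∧ (∀ w, ∑ z, Q w z = 1) ∧
    ∀ x z, A.p x z = ∑ w, B.p x w * Q w z

/-- `A'` is an input permutation of `A`: same alphabet, and
`A'(x;y) = A(x ⊕ f(y); y)` for some `f`. -/
def InputPerm (A' A : JD) : Prop :=
  ∃ h : A'.Y = A.Y, ∃ f : A.Y → Bool,
    ∀ x y, A'.p x (cast h.symm y) = A.p (xor x (f y)) y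

/-- One step of the `inferior` relation. -/
def Step (A B : JD) : Prop := Degraded A B ∨ InputPerm A B

/-- `A ⊑ B`: a finite chain of degradation / input-permutation steps from `B`
down to `A`. -/
def Inferior : JD → JD → Prop := Relation.ReflTransGen Step

/-- `A ≡ B`: mutual inferiority. -/
def JDEquiv (A B : JD) : Prop := Inferior A B ∧ Inferior B A

/-- The minus polar operation `A ⊞ B`. -/
def minusOp (A B : JD) : JD :=
  ⟨A.Y × B.Y, inferInstance,
    fun u₀ y => ∑ x₁ : Bool, A.p (xor u₀ x₁) y.1 * B.p x₁ y.2⟩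

/-- The plus polar operation `A ⊛ B`. -/
def plusOp (A B : JD) : JD :=
  ⟨Bool × A.Y × B.Y, inferInstance,
    fun u₁ z => A.p (xor z.1 u₁) z.2.1 * B.p u₁ z.2.2⟩

/-- The superb distribution `S`: input `0` deterministically, output `?`. -/
def superb : JD := ⟨Unit, inferInstance, fun x _ => if x = false then 1 else 0⟩

/-- The pitiful distribution `P`: input uniform, output `?`. -/
def pitiful : JD := ⟨Unit, inferInstance, fun _ _ => 1 / 2⟩

/-- Bhattacharyya parameter. -/
def JD.Zp (A : JD) : ℝ := 2 * ∑ y, Real.sqrt (A.p false y * A.p true y)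

/-- Total variation parameter. -/
def JD.Kp (A : JD) : ℝ := (1 / 2) * ∑ y, |A.p false y - A.p true y|

/-- Conditional entropy `H(X|Y)` (base 2). -/
def JD.Hp (A : JD) : ℝ :=
  -∑ x : Bool, ∑ y, A.p x y * Real.logb 2 (A.p x y / (A.p false y + A.p true y))

/-!
Both operations are monotone in each argument separately, so it suffices to treat one
elementary step in one argument. A degradation by a channel `Q` passes through `⊞` and `⊛`
as the product of `Q` with identity channels. An input permutation by `f` of either factor of
`⊞` is an input permutation of `A ⊞ B` (substitute `x₁ ↦ x₁ ⊕ f y₁` in the sum for the right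
factor). For `⊛` the input of the left factor is `u₀ ⊕ u₁` with `u₀` an output, so a permutation
of the left factor is the output relabelling `u₀ ↦ u₀ ⊕ f y₀`, a bijection and hence a
degradation; a permutation of the right factor is an input permutation of the relabelling
`u₀ ↦ u₀ ⊕ f y₁` of `A ⊛ B`.
-/

namespace JD

abbrev permInput (A : JD) (f : A.Y → Bool) : JD :=
  ⟨A.Y, A.fin, fun x y => A.p (xor x (f y)) y⟩

abbrev relabel (A : JD) (g : A.Y → A.Y) : JD := ⟨A.Y, A.fin, fun x y => A.p x (g y)⟩

end JD

theorem InputPerm.exists_eq_permInput {X Z : JD} (h : InputPerm X Z) :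
    ∃ f, X = Z.permInput f := by
  obtain ⟨X, iX, p⟩ := X
  obtain ⟨Z, iZ, q⟩ := Z
  obtain ⟨h, f, hf⟩ := h
  dsimp only at h
  subst h
  obtain rfl := Subsingleton.elim iX iZ
  exact ⟨f, by simpa [JD.permInput, funext_iff] using hf⟩

theorem inputPerm_permInput (A : JD) (f : A.Y → Bool) : InputPerm (A.permInput f) A :=
  ⟨rfl, f, fun _ _ => rfl⟩

theorem Degraded.refl (A : JD) : Degraded A A := by
  classical
  exact ⟨fun w z => if w = z then 1 else 0, fun w z => by positivity, fun w => by simp,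
    fun x z => by simp⟩

theorem degraded_relabel (A : JD) (e : Equiv.Perm A.Y) : Degraded (A.relabel e) A := by
  classical
  refine ⟨fun w z => if z = e.symm w then 1 else 0, fun w z => by positivity, fun w => by simp,
    fun x z => ?_⟩
  simp [Equiv.eq_symm_apply]

theorem Degraded.minusOp {A A' B B' : JD} (hA : Degraded A' A) (hB : Degraded B' B) :
    Degraded (minusOp A' B') (minusOp A B) := by
  obtain ⟨Q, hQ0, hQ1, hQ⟩ := hA
  obtain ⟨R, hR0, hR1, hR⟩ := hB
  refine ⟨fun w z => Q w.1 z.1 * R w.2 z.2, fun w z => mul_nonneg (hQ0 _ _) (hR0 _ _),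
    fun w => ?_, fun x z => ?_⟩
  · show ∑ z : A'.Y × B'.Y, Q w.1 z.1 * R w.2 z.2 = 1
    simp [Fintype.sum_prod_type, ← Finset.mul_sum, hQ1, hR1]
  · show ∑ x₁, A'.p (xor x x₁) z.1 * B'.p x₁ z.2 =
      ∑ w : A.Y × B.Y, (∑ x₁, A.p (xor x x₁) w.1 * B.p x₁ w.2) * (Q w.1 z.1 * R w.2 z.2)
    simp only [hQ, hR, Fintype.sum_prod_type, Finset.sum_mul, Finset.mul_sum]
    rw [Finset.sum_comm_cycle]
    refine Finset.sum_congr rfl fun a _ => ?_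
    rw [Finset.sum_comm]
    exact Finset.sum_congr rfl fun b _ => Finset.sum_congr rfl fun c _ => by ring

theorem Degraded.plusOp {A A' B B' : JD} (hA : Degraded A' A) (hB : Degraded B' B) :
    Degraded (plusOp A' B') (plusOp A B) := by
  classical
  obtain ⟨Q, hQ0, hQ1, hQ⟩ := hA
  obtain ⟨R, hR0, hR1, hR⟩ := hB
  refine ⟨fun w z => if w.1 = z.1 then Q w.2.1 z.2.1 * R w.2.2 z.2.2 else 0,
    fun w z => by have := hQ0 w.2.1 z.2.1; have := hR0 w.2.2 z.2.2; positivity,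
    fun w => ?_, fun x ⟨u₀, z₁, z₂⟩ => ?_⟩
  · show ∑ z : Bool × A'.Y × B'.Y, _ = 1
    simp [Fintype.sum_prod_type, ← Finset.mul_sum, hQ1, hR1]
  · show A'.p (xor u₀ x) z₁ * B'.p x z₂ =
      ∑ w : Bool × A.Y × B.Y, A.p (xor w.1 x) w.2.1 * B.p x w.2.2 *
        if w.1 = u₀ then Q w.2.1 z₁ * R w.2.2 z₂ else 0
    simp only [hQ, hR, Fintype.sum_prod_type, Finset.sum_mul, Finset.mul_sum, mul_ite, mul_zero]
    simp only [Finset.sum_ite_irrel, Finset.sum_const_zero, Finset.sum_ite_eq', Finset.mem_univ,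
      if_true]
    rw [Finset.sum_comm]
    exact Finset.sum_congr rfl fun b _ => Finset.sum_congr rfl fun c _ => by ring

theorem minusOp_permInput_left (Z C : JD) (f : Z.Y → Bool) :
    minusOp (Z.permInput f) C = (minusOp Z C).permInput (fun w => f w.1) := by
  simp only [minusOp, JD.mk.injEq, heq_eq_eq, true_and]
  funext u w
  simp only [Bool.xor_right_comm]

theorem minusOp_permInput_right (C Z : JD) (f : Z.Y → Bool) :
    minusOp C (Z.permInput f) = (minusOp C Z).permInput (fun w => f w.2) := by
  simp only [minusOp, JD.mk.injEq, heq_eq_eq, true_and]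
  funext u w
  rw [Fintype.sum_bool, Fintype.sum_bool]
  cases u <;> cases f w.2 <;> simp [add_comm]

theorem plusOp_permInput_left (Z C : JD) (f : Z.Y → Bool) :
    plusOp (Z.permInput f) C = (plusOp Z C).relabel (fun w => (xor w.1 (f w.2.1), w.2)) := by
  simp only [plusOp, JD.mk.injEq, heq_eq_eq, true_and]
  funext u w
  simp only [Bool.xor_right_comm]

theorem plusOp_permInput_right (C Z : JD) (f : Z.Y → Bool) :
    plusOp C (Z.permInput f) =
      ((plusOp C Z).relabel (fun w => (xor w.1 (f w.2.2), w.2))).permInput (fun w => f w.2.2) := by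
  simp only [plusOp, JD.mk.injEq, heq_eq_eq, true_and]
  funext u w
  cases u <;> cases f w.2.2 <;> simp

theorem involutive_xor_fst {α : Type*} (f : α → Bool) :
    Function.Involutive (fun w : Bool × α => (xor w.1 (f w.2), w.2)) := fun w => by simp

theorem Inferior.map {F : JD → JD} (hF : ∀ X Z, Step X Z → Inferior (F X) (F Z)) {X Z : JD}
    (h : Inferior X Z) : Inferior (F X) (F Z) :=
  Relation.ReflTransGen.lift' F hF _ _ h

theorem Step.minusOp_left (C : JD) {X Z : JD} : Step X Z → Step (minusOp X C) (minusOp Z C)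
  | .inl h => .inl (h.minusOp (Degraded.refl C))
  | .inr h => by
    obtain ⟨f, rfl⟩ := h.exists_eq_permInput
    rw [minusOp_permInput_left]
    exact .inr (inputPerm_permInput _ _)

theorem Step.minusOp_right (C : JD) {X Z : JD} : Step X Z → Step (minusOp C X) (minusOp C Z)
  | .inl h => .inl ((Degraded.refl C).minusOp h)
  | .inr h => by
    obtain ⟨f, rfl⟩ := h.exists_eq_permInput
    rw [minusOp_permInput_right]
    exact .inr (inputPerm_permInput _ _)

theorem Step.plusOp_left (C : JD) {X Z : JD} : Step X Z → Step (plusOp X C) (plusOp Z C)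
  | .inl h => .inl (h.plusOp (Degraded.refl C))
  | .inr h => by
    obtain ⟨f, rfl⟩ := h.exists_eq_permInput
    rw [plusOp_permInput_left]
    exact .inl <| degraded_relabel (plusOp Z C)
      ((involutive_xor_fst fun w : Z.Y × C.Y => f w.1).toPerm _)

theorem Step.plusOp_right (C : JD) {X Z : JD} : Step X Z → Inferior (plusOp C X) (plusOp C Z)
  | .inl h => .single (.inl ((Degraded.refl C).plusOp h))
  | .inr h => by
    obtain ⟨f, rfl⟩ := h.exists_eq_permInput
    rw [plusOp_permInput_right]
    exact .head (.inr (inputPerm_permInput _ _)) <| .single <| .inl <|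
      degraded_relabel (plusOp C Z) ((involutive_xor_fst fun w : C.Y × Z.Y => f w.2).toPerm _)

theorem Inferior.minusOp {A A' B B' : JD} (hA : Inferior A' A) (hB : Inferior B' B) :
    Inferior (minusOp A' B') (minusOp A B) :=
  (hA.map fun _ _ h => .single (h.minusOp_left B')).trans
    (hB.map fun _ _ h => .single (h.minusOp_right A))

theorem Inferior.plusOp {A A' B B' : JD} (hA : Inferior A' A) (hB : Inferior B' B) :
    Inferior (plusOp A' B') (plusOp A B) :=
  (hA.map fun _ _ h => .single (h.plusOp_left B')).trans (hB.map fun _ _ h => h.plusOp_right A)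

theorem stmt13_general (A A' B B' : JD)
    (h1 : Inferior A' A) (h2 : Inferior B' B) :
    Inferior (minusOp A' B') (minusOp A B) ∧
      Inferior (plusOp A' B') (plusOp A B) :=
  ⟨h1.minusOp h2, h1.plusOp h2⟩

theorem stmt13 (A A' B B' : JD)
    (hA : A.IsDist) (hB : B.IsDist) (hA' : A'.IsDist) (hB' : B'.IsDist)
    (h1 : Inferior A' A) (h2 : Inferior B' B) :
    Inferior (minusOp A' B') (minusOp A B) ∧
      Inferior (plusOp A' B') (plusOp A B) :=
  stmt13_general A A' B B' h1 h2

end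
end

section
/- Every joint distribution A on {0,1} × Y (Y finite) satisfies P ⊑ A ⊑ S, where S is the 'superb' distribution (X = 0 deterministically, output = ?) and P is the 'pitiful' distribution (X uniform, output = ?), and ⊑ is the finite-chain closure of degradation and input permutation. -/
open scoped BigOperators

noncomputable section

/-! Any `A` can be simulated from `S`: draw `(x, y) ∼ A` as output while the input is `0`, then
xor the input with the output bit `x`, and forget that bit. Conversely `P` is simulated from `A`:
append a fair coin `b` to the output and xor the input with `b`; the input is then uniform and
independent of the output, which can be forgotten. -/

theorem Inferior.trans {A B C : JD} (hAB : Inferior A B) (hBC : Inferior B C) : Inferior A C :=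
  Relation.ReflTransGen.trans hAB hBC

theorem Degraded.inferior {A B : JD} (h : Degraded A B) : Inferior A B :=
  Relation.ReflTransGen.single (Or.inl h)

theorem InputPerm.inferior {A B : JD} (h : InputPerm A B) : Inferior A B :=
  Relation.ReflTransGen.single (Or.inr h)

namespace JD

def flip (A : JD) (f : A.Y → Bool) : JD := ⟨A.Y, A.fin, fun x y => A.p (xor x (f y)) y⟩

theorem inputPerm_flip (A : JD) (f : A.Y → Bool) : InputPerm (A.flip f) A :=
  ⟨rfl, f, fun _ _ => rfl⟩

/-- The whole joint law of `A` moved into the output, the input being `0` deterministically. -/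
def toOutput (A : JD) : JD :=
  ⟨Bool × A.Y, inferInstance, fun x z => if x = false then A.p z.1 z.2 else 0⟩

def addCoin (A : JD) : JD := ⟨Bool × A.Y, inferInstance, fun x z => A.p x z.2 / 2⟩

theorem degraded_flip_toOutput (A : JD) : Degraded A (A.toOutput.flip Prod.fst) := by
  classical
  refine ⟨fun w z => if z = w.2 then 1 else 0, fun _ _ => by positivity, fun w => ?_, fun x z => ?_⟩
  · simp
  · show A.p x z = ∑ w : Bool × A.Y, (if xor x w.1 = false then A.p w.1 w.2 else 0) *
      if z = w.2 then 1 else 0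
    rw [Fintype.sum_prod_type]
    cases x <;> simp

theorem degraded_addCoin (A : JD) : Degraded A.addCoin A := by
  classical
  refine ⟨fun w z => if z.2 = w then 1 / 2 else 0, fun _ _ => by positivity, fun w => ?_,
    fun x z => ?_⟩
  · show ∑ z : Bool × A.Y, (if z.2 = w then 1 / 2 else 0 : ℝ) = 1
    simp [Fintype.sum_prod_type]
  · simp [addCoin, mul_ite, div_eq_mul_inv]

end JD

theorem degraded_superb {A : JD} (hpos : ∀ z, 0 ≤ A.p false z) (hsum : ∑ z, A.p false z = 1)
    (hzero : ∀ z, A.p true z = 0) : Degraded A superb :=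
  ⟨fun _ z => A.p false z, fun _ => hpos, fun _ => hsum, fun x z => by
    show A.p x z = ∑ _ : Unit, superb.p x () * A.p false z
    cases x <;> simp [superb, hzero]⟩

theorem degraded_pitiful {B : JD} (h : ∀ x, ∑ w, B.p x w = 1 / 2) : Degraded pitiful B :=
  ⟨fun _ _ => 1, fun _ _ => zero_le_one, fun _ => Fintype.sum_unique (ι := Unit) _, fun x _ => by
    simpa [pitiful] using (h x).symm⟩

theorem sum_xor_bool {M : Type*} [AddCommMonoid M] (g : Bool → M) (x : Bool) :
    ∑ b, g (xor x b) = ∑ b, g b := by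
  cases x <;> simp [add_comm]

theorem inferior_superb {A : JD} (hA : A.IsDist) : Inferior A superb := by
  have hOutput : Degraded A.toOutput superb :=
    degraded_superb (fun z => by simpa [JD.toOutput] using hA.1 z.1 z.2)
      (show ∑ z : Bool × A.Y, (if false = false then A.p z.1 z.2 else 0) = 1 by
        simpa [Fintype.sum_prod_type] using hA.2)
      (fun _ => rfl)
  exact (A.degraded_flip_toOutput.inferior.trans (A.toOutput.inputPerm_flip _).inferior).trans
    hOutput.inferior

theorem pitiful_inferior {A : JD} (hA : A.IsDist) : Inferior pitiful A := by
  have hmarginal : ∀ x, ∑ z, (A.addCoin.flip Prod.fst).p x z = 1 / 2 := by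
    intro x
    calc ∑ z, (A.addCoin.flip Prod.fst).p x z = (∑ b, ∑ y, A.p (xor x b) y) / 2 := by
          show ∑ z : Bool × A.Y, A.p (xor x z.1) z.2 / 2 = _
          rw [Fintype.sum_prod_type, Finset.sum_div]
          simp only [Finset.sum_div]
      _ = 1 / 2 := by rw [sum_xor_bool (fun b => ∑ y, A.p b y), hA.2]
  exact (degraded_pitiful hmarginal).inferior.trans
    ((A.addCoin.inputPerm_flip _).inferior.trans A.degraded_addCoin.inferior)

theorem stmt14 (A : JD) (hA : A.IsDist) :
    Inferior pitiful A ∧ Inferior A superb :=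
  ⟨pitiful_inferior hA, inferior_superb hA⟩

end
end
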